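/- Fix a real number ε with 0 < ε < 1/8, set α_n = ⌊n^{1/2+ε}⌋ and β_n = ⌊n^{1/4+2ε}⌋. Let f : [n] → [n] be a fixed mapping with at most α_n cyclic points and height at most α_n, and let C ⊆ [n] be its set of cyclic points. Choose, for each x ∈ C, a value b(x) ∈ [n] uniformly at random and independently, and define F : C → C by F(x) = f^{α_n}(b(x)) (this indeed lands in C since the height of f is at most α_n). Then for n large enough, the probability that F has more than β_n cyclic points or height greater than β_n is at most exp(−n^{ε/4}). -/

import Mathlib

open Classical

/-- The two-letter alphabet `{a, b}`. -/
inductive Letter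
  | a
  | b
deriving DecidableEq

instance : Fintype Letter :=
  ⟨{Letter.a, Letter.b}, fun x => by cases x <;> simp⟩

/-- The action of a word on the states of a deterministic complete automaton:
`act δ w q` is the state reached from `q` after reading the word `w`
(first letter applied first, so that `δ_{wc} = δ_c ∘ δ_w`). -/
def act {n : ℕ} {A : Type*} (δ : Fin n → A → Fin n) : List A → Fin n → Fin n
  | [], q => q
  | c :: w, q => act δ w (δ q c)

/-- A point `x` is cyclic for `f` if some positive iterate of `f` sends `x` to itself. -/
def IsCyclicPt {n : ℕ} (f : Fin n → Fin n) (x : Fin n) : Prop :=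
  ∃ i > 0, f^[i] x = x

/-- The set of cyclic points of a mapping `f` on `[n]`. -/
noncomputable def cyclicPts {n : ℕ} (f : Fin n → Fin n) : Finset (Fin n) :=
  Finset.univ.filter (IsCyclicPt f)

/-- The height of a point `x`: the least `i ≥ 0` such that `f^[i] x` is cyclic. -/
noncomputable def heightOf {n : ℕ} (f : Fin n → Fin n) (x : Fin n) : ℕ :=
  sInf {i : ℕ | IsCyclicPt f (f^[i] x)}

/-- The height of a mapping: the maximal height of a point. -/
noncomputable def height {n : ℕ} (f : Fin n → Fin n) : ℕ :=
  Finset.univ.sup (heightOf f)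

/-- `α_n = ⌊n^(1/2+ε)⌋`. -/
noncomputable def alphaN (ε : ℝ) (n : ℕ) : ℕ := ⌊(n : ℝ) ^ ((1 : ℝ)/2 + ε)⌋₊

/-- `β_n = ⌊n^(1/4+2ε)⌋`. -/
noncomputable def betaN (ε : ℝ) (n : ℕ) : ℕ := ⌊(n : ℝ) ^ ((1 : ℝ)/4 + 2*ε)⌋₊

/-- `γ_n = ⌊n^(1/8+4ε)⌋`. -/
noncomputable def gammaN (ε : ℝ) (n : ℕ) : ℕ := ⌊(n : ℝ) ^ ((1 : ℝ)/8 + 4*ε)⌋₊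

/-- The word `u_n = a^{α_n}`. -/
noncomputable def uWord (ε : ℝ) (n : ℕ) : List Letter :=
  List.replicate (alphaN ε n) Letter.a

/-- The word `v_n = u_n (b u_n)^{β_n}`. -/
noncomputable def vWord (ε : ℝ) (n : ℕ) : List Letter :=
  uWord ε n ++ (List.replicate (betaN ε n) (Letter.b :: uWord ε n)).flatten

/-- The word `w_n = v_n (bb v_n)^{γ_n}`. -/
noncomputable def wWord (ε : ℝ) (n : ℕ) : List Letter :=
  vWord ε n ++ (List.replicate (gammaN ε n) (Letter.b :: Letter.b :: vWord ε n)).flatten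

/-!
Write `g = f^[α_n]`, so that `F = g ∘ b` maps everything into `C`, and let `q c` be the fraction
of points that `g` sends to `c` (`fiberMass g c`): a probability vector on `C`; put `m = #C`.
If `F` has more than `β` cyclic points, `F` permutes a set `S ⊆ C` of size `j > β`; summing over
`S` and the `j!` permutations bounds the probability by `j! e_j(q)`, where `e_j` is the elementary
symmetric polynomial. If some point has height above `β`, its orbit `x, F x, …, F^β x` is an
injective path in `C`, of total probability at most `m β! e_β(q)`.
Chebyshev's sum inequality, applied to `q c` and `e_t(q)` with `c` removed (which antivary), gives
`(t + 1) e_{t+1}(q) ≤ (1 - t/m) e_t(q)`, whence `t! e_t(q) ≤ exp(-C(t, 2)/m)`: the birthday bound,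
whose extremal case is the uniform `q`. So the probability is at most `2m exp(-C(β, 2)/m)`, and
`m ≤ n^(1/2+ε)`, `C(β, 2) ≥ n^(1/2+4ε)/8` make this at most `2n exp(-n^(3ε)/8) ≤ exp(-n^(ε/4))`.
-/

open Finset Function Filter Real
open scoped Nat

namespace Multiset

variable {R : Type*} [CommSemiring R]

@[simp]
theorem esymm_zero_right (s : Multiset R) : s.esymm 0 = 1 := by
  simp [esymm]

@[simp]
theorem esymm_zero_left_succ (k : ℕ) : (0 : Multiset R).esymm (k + 1) = 0 := by
  simp [esymm, powersetCard_zero_right]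

theorem esymm_cons_succ (a : R) (s : Multiset R) (k : ℕ) :
    (a ::ₘ s).esymm (k + 1) = s.esymm (k + 1) + a * s.esymm k := by
  simp [esymm, powersetCard_cons, sum_map_mul_left]

end Multiset

section ElementarySymmetric

variable {ι R : Type*}

theorem esymm_map_val_nonneg [CommSemiring R] [PartialOrder R] [IsOrderedRing R] {q : ι → R}
    (hq : ∀ c, 0 ≤ q c) (T : Finset ι) (t : ℕ) : 0 ≤ (T.val.map q).esymm t := by
  rw [Finset.esymm_map_val]
  exact sum_nonneg fun S _ => prod_nonneg fun c _ => hq c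

variable [DecidableEq ι]

theorem esymm_map_val_insert [CommSemiring R] (q : ι → R) {a : ι} {U : Finset ι} (ha : a ∉ U)
    (k : ℕ) : ((insert a U).val.map q).esymm (k + 1)
      = (U.val.map q).esymm (k + 1) + q a * (U.val.map q).esymm k := by
  rw [insert_val_of_notMem ha, Multiset.map_cons, Multiset.esymm_cons_succ]

theorem succ_mul_esymm_map_val_succ [CommSemiring R] (q : ι → R) (T : Finset ι) (t : ℕ) :
    (t + 1) * (T.val.map q).esymm (t + 1) = ∑ c ∈ T, q c * ((T.erase c).val.map q).esymm t := by
  induction T using Finset.induction_on generalizing t with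
  | empty => simp
  | insert a U ha ih =>
    have herase : ∀ c ∈ U, (insert a U).erase c = insert a (U.erase c) := fun c hc =>
      erase_insert_of_ne (ne_of_mem_of_not_mem hc ha).symm
    rw [sum_insert ha, erase_insert ha, sum_congr rfl fun c hc => by rw [herase c hc],
      esymm_map_val_insert q ha]
    cases t with
    | zero =>
      have h1 := ih 0
      simp only [Nat.cast_zero, zero_add, one_mul, Multiset.esymm_zero_right, mul_one] at h1 ⊢
      rw [h1, add_comm]
    | succ s =>
      simp only [esymm_map_val_insert q (fun h => ha (mem_of_mem_erase h)), mul_add,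
        sum_add_distrib, mul_left_comm (q _) (q a), ← mul_sum, ← ih]
      push_cast
      ring

theorem sum_esymm_map_val_erase [CommRing R] (q : ι → R) (T : Finset ι) (t : ℕ) :
    ∑ c ∈ T, ((T.erase c).val.map q).esymm t = (#T - t) * (T.val.map q).esymm t := by
  induction T using Finset.induction_on generalizing t with
  | empty => cases t <;> simp
  | insert a U ha ih =>
    have herase : ∀ c ∈ U, (insert a U).erase c = insert a (U.erase c) := fun c hc =>
      erase_insert_of_ne (ne_of_mem_of_not_mem hc ha).symm
    rw [sum_insert ha, erase_insert ha, sum_congr rfl fun c hc => by rw [herase c hc],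
      card_insert_of_notMem ha]
    cases t with
    | zero => simp [add_comm]
    | succ s =>
      simp only [esymm_map_val_insert q (fun h => ha (mem_of_mem_erase h)),
        esymm_map_val_insert q ha, sum_add_distrib, ← mul_sum, ih]
      push_cast
      ring

theorem antivaryOn_esymm_map_val_erase [CommRing R] [LinearOrder R] [IsStrictOrderedRing R]
    {q : ι → R} (hq : ∀ c, 0 ≤ q c) (T : Finset ι) (t : ℕ) :
    AntivaryOn (fun c => ((T.erase c).val.map q).esymm t) q T := by
  intro c hc d hd hcd
  obtain rfl | hne := eq_or_ne c d
  · rfl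
  cases t with
  | zero => simp
  | succ k =>
    have hdc : d ∉ (T.erase c).erase d := notMem_erase d _
    have hcd' : c ∉ (T.erase c).erase d := fun h => notMem_erase c T (mem_of_mem_erase h)
    dsimp only
    rw [← insert_erase (mem_erase.2 ⟨hne.symm, hd⟩), ← insert_erase (mem_erase.2 ⟨hne, hc⟩),
      erase_right_comm, esymm_map_val_insert q hdc, esymm_map_val_insert q hcd']
    nlinarith [esymm_map_val_nonneg hq ((T.erase c).erase d) k]

theorem card_mul_esymm_map_val_succ_le [CommRing R] [LinearOrder R] [IsStrictOrderedRing R]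
    {q : ι → R} (hq : ∀ c, 0 ≤ q c) {T : Finset ι} (hsum : ∑ c ∈ T, q c = 1) (t : ℕ) :
    #T * ((t + 1) * (T.val.map q).esymm (t + 1)) ≤ (#T - t) * (T.val.map q).esymm t := by
  have := (antivaryOn_esymm_map_val_erase hq T t).card_mul_sum_le_sum_mul_sum
  rw [sum_esymm_map_val_erase, hsum, mul_one] at this
  simpa only [succ_mul_esymm_map_val_succ, mul_comm (q _)] using this

theorem factorial_mul_esymm_map_val_le_exp {q : ι → ℝ} (hq : ∀ c, 0 ≤ q c) {T : Finset ι}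
    (hsum : ∑ c ∈ T, q c = 1) (t : ℕ) :
    t ! * (T.val.map q).esymm t ≤ exp (-(t.choose 2) / #T) := by
  have hT : (0 : ℝ) < #T := by
    have : T.Nonempty := nonempty_of_sum_ne_zero (by rw [hsum]; exact one_ne_zero)
    exact_mod_cast this.card_pos
  induction t with
  | zero => simp
  | succ t ih =>
    have hstep := card_mul_esymm_map_val_succ_le hq hsum t
    have hfac : 0 ≤ (t ! : ℝ) * (T.val.map q).esymm t :=
      mul_nonneg (by positivity) (esymm_map_val_nonneg hq T t)
    have hlin : ((#T : ℝ) - t) / #T ≤ exp (-(t / #T)) := by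
      rw [sub_div, div_self hT.ne', sub_eq_neg_add]
      exact add_one_le_exp _
    calc ((t + 1)! : ℝ) * (T.val.map q).esymm (t + 1)
        = t ! * ((t + 1) * (T.val.map q).esymm (t + 1)) := by push_cast [Nat.factorial_succ]; ring
      _ ≤ t ! * ((#T - t) / #T * (T.val.map q).esymm t) := by
          refine mul_le_mul_of_nonneg_left ?_ (by positivity)
          rw [div_mul_eq_mul_div, le_div_iff₀ hT, mul_comm]
          exact hstep
      _ = ((#T - t) / #T) * (t ! * (T.val.map q).esymm t) := by ring
      _ ≤ exp (-(t / #T)) * exp (-(t.choose 2) / #T) :=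
          mul_le_mul hlin ih hfac (exp_nonneg _)
      _ = exp (-((t + 1).choose 2) / #T) := by
          rw [← exp_add, Nat.choose_succ_succ', Nat.choose_one_right]
          push_cast
          ring_nf

end ElementarySymmetric

section InjectiveTuples

variable {ι R : Type*} [DecidableEq ι]

def injectiveTuples (T : Finset ι) (t : ℕ) : Finset (Fin t → ι) :=
  (Fintype.piFinset fun _ => T).filter Injective

theorem mem_injectiveTuples {T : Finset ι} {t : ℕ} {c : Fin t → ι} :
    c ∈ injectiveTuples T t ↔ (∀ i, c i ∈ T) ∧ Injective c := by
  simp [injectiveTuples]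

theorem sum_injectiveTuples_prod [CommSemiring R] (q : ι → R) (T : Finset ι) (t : ℕ) :
    ∑ c ∈ injectiveTuples T t, ∏ i, q (c i) = t ! * (T.val.map q).esymm t := by
  induction t generalizing T with
  | zero =>
    simp [injectiveTuples, Subsingleton.elim _ (Fin.elim0 : Fin 0 → ι), injective_of_subsingleton]
  | succ t ih =>
    have hcons : ∑ c ∈ injectiveTuples T (t + 1), ∏ i, q (c i)
        = ∑ p ∈ T.sigma fun c₀ => injectiveTuples (T.erase c₀) t, q p.1 * ∏ i, q (p.2 i) := by
      refine sum_nbij' (fun c => ⟨c 0, Fin.tail c⟩) (fun p => Fin.cons p.1 p.2) ?_ ?_ ?_ ?_ ?_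
      · intro c hc
        simp only [mem_injectiveTuples, mem_sigma, mem_erase] at hc ⊢
        exact ⟨hc.1 0, fun i => ⟨fun h => Fin.succ_ne_zero i (hc.2 h), hc.1 _⟩,
          hc.2.comp (Fin.succ_injective _)⟩
      · rintro ⟨c₀, d⟩ hp
        simp only [mem_injectiveTuples, mem_sigma, mem_erase] at hp ⊢
        refine ⟨Fin.cases hp.1 fun i => (hp.2.1 i).2, Fin.cons_injective_iff.2 ⟨?_, hp.2.2⟩⟩
        rintro ⟨i, hi⟩
        exact (hp.2.1 i).1 hi
      · intro c _
        exact Fin.cons_self_tail c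
      · rintro ⟨c₀, d⟩ _
        simp
      · intro c _
        simp [Fin.prod_univ_succ, Fin.tail]
    rw [hcons, sum_sigma]
    simp_rw [← mul_sum, ih, mul_left_comm (q _), ← mul_sum, ← succ_mul_esymm_map_val_succ,
      Nat.factorial_succ]
    push_cast
    ring

theorem sum_injectiveTuples_prod_tail_le [CommSemiring R] [PartialOrder R] [IsOrderedRing R]
    {q : ι → R} (hq : ∀ c, 0 ≤ q c) (T : Finset ι) (t : ℕ) :
    ∑ c ∈ injectiveTuples T (t + 1), ∏ i : Fin t, q (c i.succ)
      ≤ #T * (t ! * (T.val.map q).esymm t) := by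
  set split : (Fin (t + 1) → ι) → ι × (Fin t → ι) := fun c => (c 0, Fin.tail c)
  have hmaps : ∀ c ∈ injectiveTuples T (t + 1), split c ∈ T ×ˢ injectiveTuples T t := by
    intro c hc
    rw [mem_injectiveTuples] at hc
    exact mem_product.2 ⟨hc.1 0, mem_injectiveTuples.2
      ⟨fun i => hc.1 _, hc.2.comp (Fin.succ_injective _)⟩⟩
  have hinj : Set.InjOn split (injectiveTuples T (t + 1)) := fun c _ c' _ h => by
    simp only [split, Prod.mk.injEq] at h
    rw [← Fin.cons_self_tail c, ← Fin.cons_self_tail c', h.1, h.2]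
  calc ∑ c ∈ injectiveTuples T (t + 1), ∏ i : Fin t, q (c i.succ)
      = ∑ p ∈ (injectiveTuples T (t + 1)).image split, ∏ i, q (p.2 i) := by
        rw [sum_image hinj]
        rfl
    _ ≤ ∑ p ∈ T ×ˢ injectiveTuples T t, ∏ i, q (p.2 i) :=
        sum_le_sum_of_subset_of_nonneg (image_subset_iff.2 hmaps)
          fun p _ _ => prod_nonneg fun i _ => hq _
    _ = #T * (t ! * (T.val.map q).esymm t) := by
        simp only [sum_product, sum_injectiveTuples_prod, sum_const, nsmul_eq_mul]

end InjectiveTuples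

section Counting

variable {κ α β γ : Type*} [Fintype κ] [Fintype α] [DecidableEq α] [Fintype β]

theorem card_filter_forall_apply_mem {d : κ → α} (hd : Injective d) (P : κ → Finset β)
    [DecidablePred fun b : α → β => ∀ i, b (d i) ∈ P i] :
    #{b : α → β | ∀ i, b (d i) ∈ P i}
      = (∏ i, #(P i)) * Fintype.card β ^ (Fintype.card α - Fintype.card κ) := by
  set Q : α → Finset β := extend d P fun _ => univ
  have hQ : ({b : α → β | ∀ i, b (d i) ∈ P i} : Finset _) = Fintype.piFinset Q := by
    ext b
    simp only [mem_filter, mem_univ, true_and, Fintype.mem_piFinset]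
    refine ⟨fun h a => ?_, fun h i => by simpa [Q, hd.extend_apply] using h (d i)⟩
    by_cases ha : ∃ i, d i = a
    · obtain ⟨i, rfl⟩ := ha
      simpa [Q, hd.extend_apply] using h i
    · simp [Q, extend_apply' _ _ _ ha]
  have hcompl : ∀ a ∈ (univ.map ⟨d, hd⟩)ᶜ, #(Q a) = Fintype.card β := by
    intro a ha
    have ha' : ¬∃ i, d i = a := by simpa using ha
    simp [Q, extend_apply' _ _ _ ha']
  rw [hQ, Fintype.card_piFinset, ← prod_mul_prod_compl (univ.map ⟨d, hd⟩), prod_map,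
    prod_congr rfl hcompl, prod_const, card_compl, card_map, card_univ]
  simp [Q, hd.extend_apply]

variable [DecidableEq γ]

noncomputable def fiberMass (g : β → γ) (c : γ) : ℝ :=
  #{z | g z = c} / Fintype.card β

theorem fiberMass_nonneg (g : β → γ) (c : γ) : 0 ≤ fiberMass g c := by
  unfold fiberMass
  positivity

theorem sum_fiberMass_eq_one [Nonempty β] {g : β → γ} {C : Finset γ}
    (hg : ∀ z, g z ∈ C) : ∑ c ∈ C, fiberMass g c = 1 := by
  have hβ : (Fintype.card β : ℝ) ≠ 0 := by exact_mod_cast Fintype.card_ne_zero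
  simp only [fiberMass, ← sum_div]
  rw [div_eq_one_iff_eq hβ]
  exact_mod_cast (card_eq_sum_card_fiberwise fun z _ => hg z).symm

theorem card_filter_forall_comp_eq [Nonempty β] {d : κ → α} (hd : Injective d) (g : β → γ) (v : κ → γ)
    [DecidablePred fun b : α → β => ∀ i, g (b (d i)) = v i] :
    (#{b : α → β | ∀ i, g (b (d i)) = v i} : ℝ)
      = (∏ i, fiberMass g (v i)) * Fintype.card β ^ Fintype.card α := by
  have hκα : Fintype.card κ ≤ Fintype.card α := Fintype.card_le_of_injective d hd
  have hcount : #{b : α → β | ∀ i, g (b (d i)) = v i}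
      = (∏ i, #{z | g z = v i}) * Fintype.card β ^ (Fintype.card α - Fintype.card κ) := by
    simpa only [mem_filter, mem_univ, true_and] using
      card_filter_forall_apply_mem hd fun i => ({z | g z = v i} : Finset β)
  simp only [fiberMass]
  rw [hcount, prod_div_distrib, prod_const, card_univ, div_mul_eq_mul_div,
    eq_div_iff (by positivity)]
  push_cast
  rw [mul_assoc, ← pow_add, Nat.sub_add_cancel hκα]

end Counting

section Dynamics

variable {n : ℕ} {f : Fin n → Fin n} {x : Fin n}

theorem isCyclicPt_iterate_of_iterate_eq {i j : ℕ} (hij : i < j) (h : f^[i] x = f^[j] x) :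
    IsCyclicPt f (f^[i] x) :=
  ⟨j - i, Nat.sub_pos_of_lt hij, by rw [← iterate_add_apply, Nat.sub_add_cancel hij.le, h]⟩

theorem exists_isCyclicPt_iterate (f : Fin n → Fin n) (x : Fin n) :
    ∃ i, IsCyclicPt f (f^[i] x) := by
  obtain ⟨i, j, hij, h⟩ :=
    Set.finite_univ.exists_lt_map_eq_of_forall_mem (f := fun i => f^[i] x) fun _ => Set.mem_univ _
  exact ⟨i, isCyclicPt_iterate_of_iterate_eq hij h⟩

theorem isCyclicPt_iterate_of_heightOf_le {k : ℕ} (h : heightOf f x ≤ k) :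
    IsCyclicPt f (f^[k] x) := by
  obtain ⟨p, hp, hper⟩ := Nat.sInf_mem (exists_isCyclicPt_iterate f x)
  refine ⟨p, hp, ?_⟩
  rw [← Nat.sub_add_cancel h, iterate_add_apply]
  exact IsPeriodicPt.apply_iterate hper _

theorem iterate_mem_cyclicPts {A : ℕ} (hA : height f ≤ A) (z : Fin n) :
    f^[A] z ∈ cyclicPts f := by
  simpa [cyclicPts] using
    isCyclicPt_iterate_of_heightOf_le ((le_sup (mem_univ z)).trans hA)

theorem injective_iterate_of_lt_heightOf {B : ℕ} (hB : B < heightOf f x) :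
    Injective fun i : Fin (B + 1) => f^[i] x := by
  intro i j h
  by_contra hne
  wlog hij : i < j generalizing i j
  · exact this h.symm (Ne.symm hne) (lt_of_le_of_ne (not_lt.1 hij) (Ne.symm hne))
  have hle : heightOf f x ≤ i := Nat.sInf_le (isCyclicPt_iterate_of_iterate_eq hij h)
  omega

end Dynamics

section UnionBounds

variable {α β : Type*} [Fintype α] [DecidableEq α] [Fintype β] [Nonempty β]
  {g : β → α} {C : Finset α}

theorem sum_card_permutation_events_eq (j : ℕ) :
    ∑ S ∈ C.powersetCard j, ∑ σ : Equiv.Perm S, (#{b : α → β | ∀ x : S, g (b x) = σ x} : ℝ)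
      = j ! * (C.val.map (fiberMass g)).esymm j * Fintype.card β ^ Fintype.card α := by
  have hevent : ∀ (S : Finset α) (σ : Equiv.Perm S),
      (#{b : α → β | ∀ x : S, g (b x) = σ x} : ℝ)
        = (∏ x ∈ S, fiberMass g x) * Fintype.card β ^ Fintype.card α := by
    intro S σ
    rw [card_filter_forall_comp_eq Subtype.val_injective g fun x => (σ x : α),
      Equiv.prod_comp σ fun x : S => fiberMass g x, prod_coe_sort]
  rw [esymm_map_val, mul_sum, sum_mul]
  refine sum_congr rfl fun S hS => ?_
  simp only [hevent, sum_const, card_univ, Fintype.card_perm, Fintype.card_coe,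
    (mem_powersetCard.1 hS).2, nsmul_eq_mul]
  ring

variable [DecidableEq β]

theorem card_biUnion_path_events_le (hg : ∀ z, g z ∈ C) (B : ℕ) :
    (#((injectiveTuples C (B + 1)).biUnion fun c =>
        {b : α → β | ∀ i : Fin B, g (b (c i.castSucc)) = c i.succ}) : ℝ)
      ≤ #C * exp (-(B.choose 2) / #C) * Fintype.card β ^ Fintype.card α := by
  have hevent : ∀ c ∈ injectiveTuples C (B + 1),
      (#{b : α → β | ∀ i : Fin B, g (b (c i.castSucc)) = c i.succ} : ℝ)
        = (∏ i : Fin B, fiberMass g (c i.succ)) * Fintype.card β ^ Fintype.card α :=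
    fun c hc => by
      have hinj : Injective fun i : Fin B => c i.castSucc :=
        (mem_injectiveTuples.1 hc).2.comp (Fin.castSucc_injective B)
      exact card_filter_forall_comp_eq hinj g _
  calc _ ≤ ∑ c ∈ injectiveTuples C (B + 1),
        (#{b : α → β | ∀ i : Fin B, g (b (c i.castSucc)) = c i.succ} : ℝ) := by
        exact_mod_cast card_biUnion_le
    _ = (∑ c ∈ injectiveTuples C (B + 1), ∏ i : Fin B, fiberMass g (c i.succ))
          * Fintype.card β ^ Fintype.card α := by
        rw [sum_congr rfl hevent, sum_mul]
    _ ≤ #C * (B ! * (C.val.map (fiberMass g)).esymm B) * Fintype.card β ^ Fintype.card α := by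
        gcongr
        exact sum_injectiveTuples_prod_tail_le (fiberMass_nonneg g) C B
    _ ≤ #C * exp (-(B.choose 2) / #C) * Fintype.card β ^ Fintype.card α := by
        gcongr
        exact factorial_mul_esymm_map_val_le_exp (fiberMass_nonneg g) (sum_fiberMass_eq_one hg) B

theorem card_biUnion_permutation_events_le (hg : ∀ z, g z ∈ C) (B : ℕ) :
    (#((Ioc B #C).biUnion fun j => (C.powersetCard j).biUnion fun S =>
        (univ : Finset (Equiv.Perm S)).biUnion fun σ =>
          {b : α → β | ∀ x : S, g (b x) = σ x}) : ℝ)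
      ≤ #C * exp (-(B.choose 2) / #C) * Fintype.card β ^ Fintype.card α := by
  have hlayer : ∀ j ∈ Ioc B #C,
      j ! * (C.val.map (fiberMass g)).esymm j ≤ exp (-(B.choose 2) / #C) := fun j hj =>
    calc j ! * (C.val.map (fiberMass g)).esymm j ≤ exp (-(j.choose 2) / #C) :=
          factorial_mul_esymm_map_val_le_exp (fiberMass_nonneg g) (sum_fiberMass_eq_one hg) j
      _ ≤ exp (-(B.choose 2) / #C) := by
          gcongr
          exact (mem_Ioc.1 hj).1.le
  calc _ ≤ ∑ j ∈ Ioc B #C, ∑ S ∈ C.powersetCard j, ∑ σ : Equiv.Perm S,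
        (#{b : α → β | ∀ x : S, g (b x) = σ x} : ℝ) := by
        exact_mod_cast card_biUnion_le.trans
          (sum_le_sum fun j _ => card_biUnion_le.trans (sum_le_sum fun S _ => card_biUnion_le))
    _ ≤ ∑ j ∈ Ioc B #C, exp (-(B.choose 2) / #C) * Fintype.card β ^ Fintype.card α := by
        simp only [sum_card_permutation_events_eq]
        exact sum_le_sum fun j hj => by gcongr; exact hlayer j hj
    _ ≤ #C * exp (-(B.choose 2) / #C) * Fintype.card β ^ Fintype.card α := by
        rw [sum_const, nsmul_eq_mul, Nat.card_Ioc, ← mul_assoc]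
        gcongr
        exact_mod_cast Nat.sub_le _ _

end UnionBounds

section SecondRound

variable {n : ℕ}

theorem exists_perm_of_lt_card_filter_isCyclicPt {F : Fin n → Fin n} {C : Finset (Fin n)}
    (hF : ∀ y, F y ∈ C) {B : ℕ} (hB : B < #(C.filter (IsCyclicPt F))) :
    ∃ j ∈ Ioc B #C, ∃ S ∈ C.powersetCard j, ∃ σ : Equiv.Perm S, ∀ x : S, F x = σ x := by
  set S := C.filter (IsCyclicPt F)
  -- `IsCyclicPt F x` unfolds to `x ∈ periodicPts F`.
  have hcyc : ∀ x : S, x.1 ∈ periodicPts F := fun x => (mem_filter.1 x.2).2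
  have hmaps : ∀ x : S, F x ∈ S := fun x =>
    mem_filter.2 ⟨hF x, (bijOn_periodicPts F).mapsTo (hcyc x)⟩
  have hinj : Injective fun x : S => (⟨F x, hmaps x⟩ : S) := fun x y h =>
    Subtype.ext <| (bijOn_periodicPts F).injOn (hcyc x) (hcyc y) (congrArg Subtype.val h)
  exact ⟨#S, mem_Ioc.2 ⟨hB, card_filter_le _ _⟩, S,
    mem_powersetCard.2 ⟨filter_subset _ _, rfl⟩,
    Equiv.ofBijective _ (Finite.injective_iff_bijective.1 hinj), fun x => rfl⟩

theorem exists_injectiveTuples_of_lt_sup_heightOf {F : Fin n → Fin n} {C : Finset (Fin n)}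
    (hF : ∀ y, F y ∈ C) {B : ℕ} (hB : B < C.sup (heightOf F)) :
    ∃ c ∈ injectiveTuples C (B + 1), ∀ i : Fin B, F (c i.castSucc) = c i.succ := by
  obtain ⟨x, hx, hxB⟩ := Finset.lt_sup_iff.1 hB
  have hmem : ∀ k, F^[k] x ∈ C
    | 0 => hx
    | k + 1 => by rw [iterate_succ_apply']; exact hF _
  refine ⟨fun i => F^[i] x, mem_injectiveTuples.2 ⟨fun i => hmem i,
    injective_iterate_of_lt_heightOf hxB⟩, fun i => ?_⟩
  simp only [Fin.val_succ, Fin.val_castSucc, iterate_succ_apply']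

theorem card_filter_lt_card_isCyclicPt_or_lt_sup_heightOf_le [NeZero n] {g : Fin n → Fin n}
    {C : Finset (Fin n)} (hg : ∀ z, g z ∈ C) (B : ℕ) :
    (#{b : Fin n → Fin n | #(C.filter (IsCyclicPt fun y => g (b y))) > B ∨
        C.sup (heightOf fun y => g (b y)) > B} : ℝ)
      ≤ 2 * #C * exp (-(B.choose 2) / #C) * n ^ n := by
  set P := (injectiveTuples C (B + 1)).biUnion fun c =>
    ({b : Fin n → Fin n | ∀ i : Fin B, g (b (c i.castSucc)) = c i.succ} : Finset _)
  set Q := (Ioc B #C).biUnion fun j => (C.powersetCard j).biUnion fun S =>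
    (univ : Finset (Equiv.Perm S)).biUnion fun σ =>
      ({b : Fin n → Fin n | ∀ x : S, g (b x) = σ x} : Finset _)
  have hsub : ({b : Fin n → Fin n | #(C.filter (IsCyclicPt fun y => g (b y))) > B ∨
      C.sup (heightOf fun y => g (b y)) > B} : Finset _) ⊆ P ∪ Q := by
    intro b hb
    simp only [P, Q, mem_filter, mem_univ, true_and, mem_union, mem_biUnion] at hb ⊢
    rcases hb with hcyc | hheight
    · exact Or.inr (exists_perm_of_lt_card_filter_isCyclicPt (fun y => hg (b y)) hcyc)
    · exact Or.inl (exists_injectiveTuples_of_lt_sup_heightOf (fun y => hg (b y)) hheight)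
  have hP : (#P : ℝ) ≤ #C * exp (-(B.choose 2) / #C) * n ^ n := by
    have := card_biUnion_path_events_le (β := Fin n) hg B
    rwa [Fintype.card_fin] at this
  have hQ : (#Q : ℝ) ≤ #C * exp (-(B.choose 2) / #C) * n ^ n := by
    have := card_biUnion_permutation_events_le (β := Fin n) hg B
    rwa [Fintype.card_fin] at this
  calc _ ≤ (#(P ∪ Q) : ℝ) := by exact_mod_cast card_le_card hsub
    _ ≤ #P + #Q := by exact_mod_cast card_union_le P Q
    _ ≤ _ := add_le_add hP hQ
    _ = 2 * #C * exp (-(B.choose 2) / #C) * n ^ n := by ring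

end SecondRound

section Asymptotics

variable {ε : ℝ}

theorem eventually_log_two_mul_add_rpow_le (hε : 0 < ε) :
    ∀ᶠ x : ℝ in atTop, log (2 * x) + x ^ (ε / 4) ≤ x ^ (3 * ε) / 8 := by
  have hlog := (isLittleO_log_rpow_atTop (by positivity : 0 < 3 * ε)).def
    (by norm_num : (0 : ℝ) < 1 / 32)
  have hgap : ∀ᶠ x : ℝ in atTop, 16 ≤ x ^ (3 * ε - ε / 4) :=
    (tendsto_rpow_atTop (by linarith)).eventually_ge_atTop 16
  filter_upwards [hlog, hgap, eventually_ge_atTop 2] with x hlogx hgapx hx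
  have hx0 : 0 < x := by linarith
  have hlog2 : log (2 * x) ≤ 2 * log x := by
    rw [← log_rpow hx0]
    exact log_le_log (by positivity) (by norm_num; nlinarith)
  have hsplit : x ^ (3 * ε) = x ^ (ε / 4) * x ^ (3 * ε - ε / 4) := by
    rw [← rpow_add hx0]; ring_nf
  rw [norm_of_nonneg (log_nonneg (by linarith)), norm_of_nonneg (by positivity)] at hlogx
  nlinarith [rpow_pos_of_pos hx0 (ε / 4)]

theorem betaN_choose_two_ge {n : ℕ} (hu : 4 ≤ (n : ℝ) ^ ((1 : ℝ) / 4 + 2 * ε)) :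
    (n : ℝ) ^ ((1 : ℝ) / 2 + 4 * ε) / 8 ≤ (betaN ε n).choose 2 := by
  set u := (n : ℝ) ^ ((1 : ℝ) / 4 + 2 * ε)
  have hn : (0 : ℝ) < n := by
    refine (Nat.cast_nonneg n).lt_of_ne fun h => ?_
    have : u ≤ 1 := by simp only [u, ← h, zero_rpow_le_one]
    linarith
  have hsq : (n : ℝ) ^ ((1 : ℝ) / 2 + 4 * ε) = u * u := by
    rw [← rpow_add hn]; ring_nf
  have hβ : u - 1 < betaN ε n := by
    have := Nat.lt_floor_add_one u
    unfold betaN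
    linarith
  rw [hsq, Nat.cast_choose_two]
  nlinarith

theorem two_mul_mul_exp_neg_betaN_choose_le {m : ℝ} {n : ℕ} (hm0 : 0 < m) (hmn : m ≤ n)
    (hmα : m ≤ (n : ℝ) ^ ((1 : ℝ) / 2 + ε)) (hu : 4 ≤ (n : ℝ) ^ ((1 : ℝ) / 4 + 2 * ε))
    (hlog : log (2 * n) + (n : ℝ) ^ (ε / 4) ≤ (n : ℝ) ^ (3 * ε) / 8) :
    2 * m * exp (-((betaN ε n).choose 2) / m) ≤ exp (-(n : ℝ) ^ (ε / 4)) := by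
  have hn : (0 : ℝ) < n := hm0.trans_le hmn
  have hrate : (n : ℝ) ^ (3 * ε) / 8 ≤ (betaN ε n).choose 2 / m :=
    calc (n : ℝ) ^ (3 * ε) / 8
        = (n : ℝ) ^ ((1 : ℝ) / 2 + 4 * ε) / 8 / (n : ℝ) ^ ((1 : ℝ) / 2 + ε) := by
          rw [div_right_comm, ← rpow_sub hn]
          ring_nf
      _ ≤ (betaN ε n).choose 2 / (n : ℝ) ^ ((1 : ℝ) / 2 + ε) := by
          gcongr; exact betaN_choose_two_ge hu
      _ ≤ (betaN ε n).choose 2 / m := by gcongr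
  calc 2 * m * exp (-((betaN ε n).choose 2) / m)
      ≤ 2 * n * exp (-((n : ℝ) ^ (3 * ε) / 8)) := by
        rw [neg_div]
        gcongr
    _ = exp (log (2 * n) - (n : ℝ) ^ (3 * ε) / 8) := by
        rw [exp_sub, exp_log (by positivity), exp_neg, ← div_eq_mul_inv]
    _ ≤ exp (-(n : ℝ) ^ (ε / 4)) := by
        gcongr
        linarith

end Asymptotics

theorem second_round_cyclic_height_bound_general (ε : ℝ) (hε0 : 0 < ε) :
    ∃ N : ℕ, ∀ n ≥ N, ∀ f : Fin n → Fin n,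
      (cyclicPts f).card ≤ alphaN ε n → height f ≤ alphaN ε n →
      (((Finset.univ : Finset (Fin n → Fin n)).filter
          (fun b =>
            ((cyclicPts f).filter
                (IsCyclicPt (fun y => f^[alphaN ε n] (b y)))).card > betaN ε n ∨
            (cyclicPts f).sup (heightOf (fun y => f^[alphaN ε n] (b y))) > betaN ε n)).card : ℝ)
        / (Fintype.card (Fin n → Fin n) : ℝ)
        ≤ Real.exp (-(n : ℝ) ^ (ε/4)) := by
  have hlarge : ∀ᶠ n : ℕ in atTop, 1 ≤ n ∧ 4 ≤ (n : ℝ) ^ ((1 : ℝ) / 4 + 2 * ε) ∧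
      log (2 * n) + (n : ℝ) ^ (ε / 4) ≤ (n : ℝ) ^ (3 * ε) / 8 :=
    (eventually_ge_atTop 1).and <| tendsto_natCast_atTop_atTop.eventually <|
      ((tendsto_rpow_atTop (by positivity)).eventually_ge_atTop 4).and
        (eventually_log_two_mul_add_rpow_le hε0)
  obtain ⟨N, hN⟩ := eventually_atTop.1 hlarge
  refine ⟨N, fun n hn f hcard hheight => ?_⟩
  obtain ⟨hn1, hu, hlog⟩ := hN n hn
  have : NeZero n := ⟨by omega⟩
  have hC : ∀ z, f^[alphaN ε n] z ∈ cyclicPts f := iterate_mem_cyclicPts hheight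
  have hm0 : (0 : ℝ) < #(cyclicPts f) := by exact_mod_cast card_pos.2 ⟨_, hC 0⟩
  have hmn : (#(cyclicPts f) : ℝ) ≤ n := by
    exact_mod_cast (card_le_univ _).trans_eq (Fintype.card_fin n)
  have hmα : (#(cyclicPts f) : ℝ) ≤ (n : ℝ) ^ ((1 : ℝ) / 2 + ε) :=
    (Nat.cast_le.2 hcard).trans (Nat.floor_le (by positivity))
  rw [Fintype.card_fun, Fintype.card_fin, Nat.cast_pow, div_le_iff₀ (by positivity)]
  exact (card_filter_lt_card_isCyclicPt_or_lt_sup_heightOf_le hC _).trans <|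
    mul_le_mul_of_nonneg_right (two_mul_mul_exp_neg_betaN_choose_le hm0 hmn hmα hu hlog)
      (by positivity)

/-- For `0 < ε < 1/8`, for `n` large enough: let `f` be a fixed mapping on `[n]` with at
most `α_n` cyclic points and height at most `α_n`, and let `C` be its set of cyclic
points. If for each `x ∈ C` a value `b(x)` is chosen uniformly and independently in `[n]`
and `F : C → C` is defined by `F(x) = f^[α_n](b(x))` (which lands in `C` since the height
of `f` is at most `α_n`; cyclic points and height of `F` are expressed below through the
globally defined map `y ↦ f^[α_n](b(y))`, whose restriction to `C` is `F`), then the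
probability that `F` has more than `β_n` cyclic points or height greater than `β_n` is at
most `exp(-n^(ε/4))`. -/
theorem second_round_cyclic_height_bound (ε : ℝ) (hε0 : 0 < ε) (hε1 : ε < 1/8) :
    ∃ N : ℕ, ∀ n ≥ N, ∀ f : Fin n → Fin n,
      (cyclicPts f).card ≤ alphaN ε n → height f ≤ alphaN ε n →
      (((Finset.univ : Finset (Fin n → Fin n)).filter
          (fun b =>
            ((cyclicPts f).filter
                (IsCyclicPt (fun y => f^[alphaN ε n] (b y)))).card > betaN ε n ∨
            (cyclicPts f).sup (heightOf (fun y => f^[alphaN ε n] (b y))) > betaN ε n)).card : ℝ)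
        / (Fintype.card (Fin n → Fin n) : ℝ)
        ≤ Real.exp (-(n : ℝ) ^ (ε/4)) :=
  second_round_cyclic_height_bound_general ε hε0
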